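/- Under the same decomposition hypotheses, if for a pair i ≠ j the operator S_{ij} ∈ End(V) is a generalised formal symmetry, i.e. P_i S_{ij} = S'_{ij} P_j for some S'_{ij}, and S'_{ij} commutes with the P_k and Q_k as needed, then S_{ij} Pr_j is a formal symmetry of P = P₀⋯P_ℓ: explicitly P (S_{ij} Pr_j) = (P^i S'_{ij} Q_j) P. -/

import Mathlib

open Finset

/-- The product `∏_{j ∈ s} P j` of a family of pairwise commuting endomorphisms. -/
def prodOver {R : Type*} [Monoid R] {n : ℕ} (P : Fin n → R)
    (hP : ∀ i j, Commute (P i) (P j)) (s : Finset (Fin n)) : R :=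
  s.noncommProd P fun a _ b _ _ => hP a b

section prodOver

variable {R : Type*} [Monoid R] {n : ℕ} (P : Fin n → R) (hP : ∀ i j, Commute (P i) (P j))

lemma prodOver_eq_mul_prodOver_erase {s : Finset (Fin n)} {i : Fin n} (hi : i ∈ s) :
    prodOver P hP s = P i * prodOver P hP (s.erase i) := by
  unfold prodOver
  rw [Finset.noncommProd_congr (Finset.insert_erase hi).symm (fun _ _ => rfl)
    fun a _ b _ _ => hP a b]
  exact Finset.noncommProd_insert_of_notMem _ _ _ _ (Finset.notMem_erase i s)

lemma commute_prodOver {x : R} (hx : ∀ k, Commute x (P k)) (s : Finset (Fin n)) :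
    Commute x (prodOver P hP s) :=
  Finset.noncommProd_commute _ _ _ _ fun k _ => hx k

lemma prodOver_eq_prodOver_erase_mul {s : Finset (Fin n)} {i : Fin n} (hi : i ∈ s) :
    prodOver P hP s = prodOver P hP (s.erase i) * P i := by
  rw [prodOver_eq_mul_prodOver_erase P hP hi, (commute_prodOver P hP (hP i) _).eq]

end prodOver

lemma mul_mul_mul_eq_of_intertwine {M : Type*} [Monoid M] {p a b c d s s' q : M}
    (hba : p = b * a) (hcd : p = c * d) (hgen : a * s = s' * c) (hqc : Commute q c) :
    p * (s * (q * d)) = b * s' * q * p :=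
  calc p * (s * (q * d)) = b * (a * s) * q * d := by rw [hba]; simp only [mul_assoc]
    _ = b * s' * q * (c * d) := by
      rw [hgen]; simp only [mul_assoc, hqc.left_comm]
    _ = b * s' * q * p := by rw [hcd]

theorem statement18_general {F V : Type*} [Field F] [AddCommGroup V] [Module F V]
    (ℓ : ℕ) (P Q : Fin (ℓ + 1) → Module.End F V)
    (hP : ∀ i j, Commute (P i) (P j))
    (hQP : ∀ i j, Commute (Q i) (P j))
    (i j : Fin (ℓ + 1))
    (Sij S'ij : Module.End F V)
    (hgen : P i * Sij = S'ij * P j) :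
    prodOver P hP Finset.univ * (Sij * (Q j * prodOver P hP (Finset.univ.erase j))) =
      (prodOver P hP (Finset.univ.erase i) * S'ij * Q j) *
        prodOver P hP Finset.univ :=
  mul_mul_mul_eq_of_intertwine (prodOver_eq_prodOver_erase_mul P hP (mem_univ i))
    (prodOver_eq_mul_prodOver_erase P hP (mem_univ j)) hgen (hQP j j)

/-- Let `P = P₀⋯P_ℓ` with decomposition `id_V = Σ_k Q_k P^k`.
If `i ≠ j` and `S_{ij}` is a generalised formal symmetry,
`P_i S_{ij} = S'_{ij} P_j` with `S'_{ij}` commuting with all `P_k`, then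
`S_{ij} Pr_j` (with `Pr_j = Q_j P^j`) is a formal symmetry of `P`:
`P (S_{ij} Pr_j) = (P^i S'_{ij} Q_j) P`. -/
theorem statement18 {F V : Type*} [Field F] [AddCommGroup V] [Module F V]
    (ℓ : ℕ) (P Q : Fin (ℓ + 1) → Module.End F V)
    (hP : ∀ i j, Commute (P i) (P j))
    (hQP : ∀ i j, Commute (Q i) (P j))
    (hid : ∑ k : Fin (ℓ + 1), Q k * prodOver P hP (Finset.univ.erase k) = 1)
    (i j : Fin (ℓ + 1)) (hij : i ≠ j)
    (Sij S'ij : Module.End F V)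
    (hgen : P i * Sij = S'ij * P j)
    (hS' : ∀ k, Commute S'ij (P k)) :
    prodOver P hP Finset.univ * (Sij * (Q j * prodOver P hP (Finset.univ.erase j))) =
      (prodOver P hP (Finset.univ.erase i) * S'ij * Q j) *
        prodOver P hP Finset.univ :=
  statement18_general ℓ P Q hP hQP i j Sij S'ij hgen
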